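/- Let n ≥ 6 and let J_1, J_2 be disjoint subsets of {1,…,n}. Suppose i, i+1, i+2 ∈ J_1 and i+3, i+4, i+5 ∈ J_2, and suppose that i−1 ∈ J_1 whenever i ≥ 2 and that i+6 ∈ J_1 whenever i+6 ≤ n. Then X(J_1, J_2) is similar to X(J_1, J_2 ∖ {i+3}). -/
import Mathlib


open Matrix BigOperators

/-- The `(n+1) × (n+1)` complex matrix with entry `1` in (1-based) position `(a, b)`
and `0` elsewhere. -/
noncomputable def Ecplx (n a b : ℕ) : Matrix (Fin (n + 1)) (Fin (n + 1)) ℂ :=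
  Matrix.of fun p q => if (p : ℕ) + 1 = a ∧ (q : ℕ) + 1 = b then 1 else 0

/-- `X(J₁,J₂) = ∑_{i∈J₁} E_{i,i+1} + ∑_{i∈J₂} E_{i+1,i}`. -/
noncomputable def XA (n : ℕ) (J₁ J₂ : Finset ℕ) : Matrix (Fin (n + 1)) (Fin (n + 1)) ℂ :=
  ∑ i ∈ J₁, Ecplx n i (i + 1) + ∑ i ∈ J₂, Ecplx n (i + 1) i

lemma Emul_eq (n a b d : ℕ) (hb1 : 1 ≤ b) (hb2 : b ≤ n + 1) :
    Ecplx n a b * Ecplx n b d = Ecplx n a d := by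
  ext p q
  simp only [Ecplx, Matrix.mul_apply, Matrix.of_apply]
  rw [Finset.sum_eq_single (⟨b - 1, by omega⟩ : Fin (n + 1))]
  · simp only [Fin.val_mk]
    split_ifs <;> simp_all <;> omega
  · intro r _ hr
    have : (r : ℕ) + 1 ≠ b := by
      intro h; apply hr; apply Fin.ext; simp; omega
    split_ifs <;> simp_all
  · intro h; exact absurd (Finset.mem_univ _) h

lemma Emul_ne (n a b c d : ℕ) (h : b ≠ c) :
    Ecplx n a b * Ecplx n c d = 0 := by
  ext p q
  simp only [Ecplx, Matrix.mul_apply, Matrix.of_apply, Matrix.zero_apply]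
  apply Finset.sum_eq_zero
  intro r _
  split_ifs <;> simp_all

/-- Local pattern (3) of Lemma 6.1 in type `Aₙ`: if `i, i+1, i+2 ∈ J₁`,
`i+3, i+4, i+5 ∈ J₂`, and the neighbors of this `A₆` subdiagram lie in `J₁`
(`i−1 ∈ J₁` when `i ≥ 2`, `i+6 ∈ J₁` when `i+6 ≤ n`), then `X(J₁,J₂)` is similar
to `X(J₁, J₂ ∖ {i+3})`. -/
theorem stmt19 (n : ℕ) (hn : 6 ≤ n) (J₁ J₂ : Finset ℕ)
    (hJ₁ : J₁ ⊆ Finset.Icc 1 n) (hJ₂ : J₂ ⊆ Finset.Icc 1 n) (hdisj : Disjoint J₁ J₂)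
    (i : ℕ) (hi₁ : i ∈ J₁) (hi₂ : i + 1 ∈ J₁) (hi₃ : i + 2 ∈ J₁)
    (hi₄ : i + 3 ∈ J₂) (hi₅ : i + 4 ∈ J₂) (hi₆ : i + 5 ∈ J₂)
    (hleft : 2 ≤ i → i - 1 ∈ J₁) (hright : i + 6 ≤ n → i + 6 ∈ J₁) :
    ∃ g : (Matrix (Fin (n + 1)) (Fin (n + 1)) ℂ)ˣ,
      (g : Matrix (Fin (n + 1)) (Fin (n + 1)) ℂ) * XA n J₁ J₂ *
          ((g⁻¹ : (Matrix (Fin (n + 1)) (Fin (n + 1)) ℂ)ˣ) :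
            Matrix (Fin (n + 1)) (Fin (n + 1)) ℂ)
        = XA n J₁ (J₂.erase (i + 3)) := by
  -- range facts
  have hi1 : 1 ≤ i := (Finset.mem_Icc.mp (hJ₁ hi₁)).1
  have hi5 : i + 5 ≤ n := (Finset.mem_Icc.mp (hJ₂ hi₆)).2
  have hnotJ₂ : ∀ j ∈ J₁, j ∉ J₂ := fun j hj => Finset.disjoint_left.mp hdisj hj
  have hi6notJ₂ : i + 6 ∉ J₂ := by
    intro h
    rcases le_or_gt (i + 6) n with hle | hlt
    · exact hnotJ₂ _ (hright hle) h
    · have := (Finset.mem_Icc.mp (hJ₂ h)).2; omega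
  -- the nilpotent part
  set N : Matrix (Fin (n + 1)) (Fin (n + 1)) ℂ :=
    Ecplx n (i + 6) i + Ecplx n (i + 5) (i + 1) + Ecplx n (i + 4) (i + 2) with hNdef
  set A : Matrix (Fin (n + 1)) (Fin (n + 1)) ℂ := ∑ j ∈ J₁, Ecplx n j (j + 1) with hAdef
  set B : Matrix (Fin (n + 1)) (Fin (n + 1)) ℂ := ∑ j ∈ J₂, Ecplx n (j + 1) j with hBdef
  set B' : Matrix (Fin (n + 1)) (Fin (n + 1)) ℂ :=
    ∑ j ∈ J₂.erase (i + 3), Ecplx n (j + 1) j with hB'def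
  -- anything with column index ≤ i+3 kills N
  have hcol : ∀ a b : ℕ, b ≤ i + 3 → Ecplx n a b * N = 0 := by
    intro a b hb
    rw [hNdef, mul_add, mul_add, Emul_ne n a b (i + 6) i (by omega),
      Emul_ne n a b (i + 5) (i + 1) (by omega),
      Emul_ne n a b (i + 4) (i + 2) (by omega)]
    simp
  have hN2 : N * N = 0 := by
    rw [hNdef, add_mul, add_mul, ← hNdef, hcol _ _ (by omega), hcol _ _ (by omega),
      hcol _ _ (by omega)]
    simp
  -- E * A
  have hEA : ∀ a b : ℕ, b ∈ J₁ → Ecplx n a b * A = Ecplx n a (b + 1) := by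
    intro a b hb
    rw [hAdef, Finset.mul_sum, Finset.sum_eq_single b]
    · exact Emul_eq n a b (b + 1) (Finset.mem_Icc.mp (hJ₁ hb)).1
        (by have := (Finset.mem_Icc.mp (hJ₁ hb)).2; omega)
    · intro j _ hj; exact Emul_ne n a b j (j + 1) (Ne.symm hj)
    · intro h; exact absurd hb h
  have hNA : N * A = Ecplx n (i + 6) (i + 1) + Ecplx n (i + 5) (i + 2)
      + Ecplx n (i + 4) (i + 3) := by
    rw [hNdef, add_mul, add_mul, hEA _ _ hi₁, hEA _ _ hi₂, hEA _ _ hi₃]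
  -- N * B = 0
  have hNB : N * B = 0 := by
    rw [hBdef, Finset.mul_sum]
    apply Finset.sum_eq_zero
    intro j hj
    have hj1 : j ≠ i := fun h => hnotJ₂ i hi₁ (h ▸ hj)
    have hj2 : j ≠ i + 1 := fun h => hnotJ₂ (i + 1) hi₂ (h ▸ hj)
    have hj0 : j + 1 ≠ i := by
      intro h
      rcases Nat.lt_or_ge i 2 with h2 | h2
      · have := (Finset.mem_Icc.mp (hJ₂ hj)).1; omega
      · exact hnotJ₂ (i - 1) (hleft h2) (by
          have : j = i - 1 := by omega
          exact this ▸ hj)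
    rw [hNdef, add_mul, add_mul, Emul_ne n (i + 6) i (j + 1) j (Ne.symm hj0),
      Emul_ne n (i + 5) (i + 1) (j + 1) j (by omega),
      Emul_ne n (i + 4) (i + 2) (j + 1) j (by omega)]
    simp
  -- A * N = 0
  have hAN : A * N = 0 := by
    rw [hAdef, Finset.sum_mul]
    apply Finset.sum_eq_zero
    intro j hj
    have h1 : j ≠ i + 3 := fun h => hnotJ₂ j hj (h ▸ hi₄)
    have h2 : j ≠ i + 4 := fun h => hnotJ₂ j hj (h ▸ hi₅)
    have h3 : j ≠ i + 5 := fun h => hnotJ₂ j hj (h ▸ hi₆)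
    rw [hNdef, mul_add, mul_add, Emul_ne n j (j + 1) (i + 6) i (by omega),
      Emul_ne n j (j + 1) (i + 5) (i + 1) (by omega),
      Emul_ne n j (j + 1) (i + 4) (i + 2) (by omega)]
    simp
  -- B * E
  have hBE1 : ∀ a b : ℕ, a ∈ J₂ → B * Ecplx n a b = Ecplx n (a + 1) b := by
    intro a b ha
    rw [hBdef, Finset.sum_mul, Finset.sum_eq_single a]
    · exact Emul_eq n (a + 1) a b (Finset.mem_Icc.mp (hJ₂ ha)).1
        (by have := (Finset.mem_Icc.mp (hJ₂ ha)).2; omega)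
    · intro j _ hj; exact Emul_ne n (j + 1) j a b hj
    · intro h; exact absurd ha h
  have hBE0 : ∀ a b : ℕ, a ∉ J₂ → B * Ecplx n a b = 0 := by
    intro a b ha
    rw [hBdef, Finset.sum_mul]
    apply Finset.sum_eq_zero
    intro j hj
    exact Emul_ne n (j + 1) j a b (fun h => ha (h ▸ hj))
  have hBN : B * N = Ecplx n (i + 6) (i + 1) + Ecplx n (i + 5) (i + 2) := by
    rw [hNdef, mul_add, mul_add, hBE0 _ _ hi6notJ₂, hBE1 _ _ hi₆, hBE1 _ _ hi₅]
    simp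
  have hNAN : N * A * N = 0 := by
    rw [hNA, add_mul, add_mul, hcol _ _ (by omega), hcol _ _ (by omega),
      hcol _ _ (by omega)]
    simp
  -- split B
  have hBsplit : B = Ecplx n (i + 4) (i + 3) + B' := by
    have := (Finset.add_sum_erase J₂ (fun j => Ecplx n (j + 1) j) hi₄).symm
    simpa using this
  -- the unit
  refine ⟨⟨1 - N, 1 + N, ?_, ?_⟩, ?_⟩
  · have : (1 - N) * (1 + N) = 1 - N * N := by noncomm_ring
    rw [this, hN2, sub_zero]
  · have : (1 + N) * (1 - N) = 1 - N * N := by noncomm_ring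
    rw [this, hN2, sub_zero]
  · show (1 - N) * XA n J₁ J₂ * ((⟨1 - N, 1 + N, _, _⟩ :
      (Matrix (Fin (n + 1)) (Fin (n + 1)) ℂ)ˣ)⁻¹ : (Matrix (Fin (n + 1)) (Fin (n + 1)) ℂ)ˣ) = _
    rw [Units.inv_mk]
    show (1 - N) * XA n J₁ J₂ * (1 + N) = XA n J₁ (J₂.erase (i + 3))
    have hX : XA n J₁ J₂ = A + B := rfl
    have hX' : XA n J₁ (J₂.erase (i + 3)) = A + B' := rfl
    rw [hX, hX']
    have h1 : N * (A + B) = N * A := by rw [mul_add, hNB, add_zero]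
    have expand : (1 - N) * (A + B) * (1 + N)
        = (A + B) + (A + B) * N - N * (A + B) - N * (A + B) * N := by noncomm_ring
    rw [expand, h1, add_mul, hAN, zero_add, hBN, hNA, hBsplit,
      add_mul, add_mul, hcol _ _ (by omega), hcol _ _ (by omega), hcol _ _ (by omega)]
    abel
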